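/- Let k and ℓ be positive integers and let p, q be integers. Then A^k_{p,a}·A^ℓ_{a,q} = 0 for every integer a outside the range p + k ≤ a ≤ q − ℓ, and ∑_{a=p+k}^{q−ℓ} A^k_{p,a} · A^ℓ_{a,q} = A^{k+ℓ}_{p,q} (the sum being interpreted as 0 when q − ℓ < p + k). -/

import Mathlib

/-!
For `k ≥ 0` the entry `A^k_{p,q}` is `e_{q-p-k}(-α_{p+1}, …, -α_{q-1})` when `p + k ≤ q` and `0`
otherwise (for `k = 0` this is the identity matrix). Expanding `e_m` in its first variable gives
`A^{k+1}_{p,q} = A^k_{p+1,q} - α_{p+1} A^{k+1}_{p+1,q}`. The band sums `∑_a A^k_{p,a} A^l_{a,q}`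
obey the same recursion in `(k, p)`, with the same initial value at `k = 0`, so they equal
`A^{k+l}_{p,q}` by descending induction on `p`.
-/

variable {R : Type*} [CommRing R]

/-- Elementary symmetric polynomial `e_m` of the entries of a list (zero for `m < 0`). -/
def esymL (l : List R) (m : ℤ) : R :=
  if 0 ≤ m then
    ∑ s ∈ Finset.powersetCard m.toNat (Finset.univ : Finset (Fin l.length)), ∏ i ∈ s, l.get i
  else 0

/-- Complete homogeneous symmetric polynomial `h_m` of the entries of a list (zero for `m < 0`). -/
def hsymL (l : List R) (m : ℤ) : R :=
  if 0 ≤ m then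
    ∑ s ∈ (Finset.univ : Finset (Fin l.length)).sym m.toNat, ((s.1).map l.get).prod
  else 0

/-- The list `f a, f (a+1), …, f b` (empty if `b < a`). -/
def intList (f : ℤ → R) (a b : ℤ) : List R :=
  (List.range (b + 1 - a).toNat).map (fun p => f (a + (p : ℤ)))

/-- `e_m(f a, …, f b)`. -/
def eI (f : ℤ → R) (a b m : ℤ) : R := esymL (intList f a b) m

/-- `h_m(f a, …, f b)`. -/
def hI (f : ℤ → R) (a b m : ℤ) : R := hsymL (intList f a b) m

/-- The matrix entries `A^k_{ij}` of the deformed current operator `J_k^{(α)}`: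
`A^k_{ij} = e_{j−i−k}(−α_{i+1},…,−α_{j−1})` if `k > 0` and `j ≥ i + k`;
`A^k_{ij} = h_{j−i−k}(α_j,…,α_i)` if `k ≤ 0` and `j ≤ i ≤ j − k`; `0` otherwise. -/
def Amat (α : ℤ → R) (k i j : ℤ) : R :=
  if 0 < k ∧ i + k ≤ j then eI (fun t => -α t) (i + 1) (j - 1) (j - i - k)
  else if k ≤ 0 ∧ j ≤ i ∧ i ≤ j - k then hI α j i (j - i - k)
  else 0

namespace Multiset

variable {S : Type*} [CommSemiring S]

theorem esymm_zero (s : Multiset S) : s.esymm 0 = 1 := by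
  simp [esymm, powersetCard_zero_left]

theorem esymm_eq_zero_of_card_lt (s : Multiset S) {n : ℕ} (h : card s < n) : s.esymm n = 0 := by
  simp [esymm, powersetCard_eq_empty _ h]

theorem esymm_cons_succ (a : S) (s : Multiset S) (n : ℕ) :
    (a ::ₘ s).esymm (n + 1) = s.esymm (n + 1) + a * s.esymm n := by
  simp only [esymm, powersetCard_cons, map_add, sum_add, map_map, Function.comp_def, prod_cons,
    sum_map_mul_left]

end Multiset

theorem esymL_eq_esymm (l : List R) {m : ℤ} (hm : 0 ≤ m) :
    esymL l m = Multiset.esymm (l : Multiset R) m.toNat := by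
  rw [esymL, if_pos hm, ← List.ofFn_get l, ← Fin.univ_val_map, Finset.esymm_map_val,
    List.ofFn_get]

theorem esymL_zero (l : List R) : esymL l 0 = 1 := by
  rw [esymL_eq_esymm l le_rfl, Int.toNat_zero, Multiset.esymm_zero]

theorem esymL_eq_zero_of_length_lt (l : List R) {m : ℤ} (h : (l.length : ℤ) < m) :
    esymL l m = 0 := by
  rw [esymL_eq_esymm l (by omega)]
  exact Multiset.esymm_eq_zero_of_card_lt _ (by simp only [Multiset.coe_card]; omega)

theorem esymL_cons (x : R) (l : List R) (m : ℤ) :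
    esymL (x :: l) m = esymL l m + x * esymL l (m - 1) := by
  rcases lt_trichotomy m 0 with hm | rfl | hm
  · simp only [esymL, if_neg (show ¬ 0 ≤ m by omega), if_neg (show ¬ 0 ≤ m - 1 by omega),
      mul_zero, add_zero]
  · simp [esymL]
  · rw [esymL_eq_esymm _ (by omega), esymL_eq_esymm _ (by omega), esymL_eq_esymm _ (by omega),
      show m.toNat = (m - 1).toNat + 1 by omega, ← Multiset.cons_coe, Multiset.esymm_cons_succ]

theorem hsymL_zero (l : List R) : hsymL l 0 = 1 := by
  rw [hsymL, if_pos le_rfl, Int.toNat_zero, Finset.sym_zero, Finset.sum_singleton]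
  rfl

theorem intList_eq_map_range {M : Type*} (f : ℤ → M) (a b : ℤ) :
    intList f a b = (List.range (b + 1 - a).toNat).map (fun p : ℕ => f (a + p)) := by
  change List.map _ ((List.range _).flatMap (pure ∘ Nat.cast)) = _
  rw [List.flatMap_pure_eq_map, List.map_map]
  rfl

theorem intList_length {M : Type*} (f : ℤ → M) (a b : ℤ) :
    (intList f a b).length = (b + 1 - a).toNat := by
  simp [intList_eq_map_range]

theorem intList_cons {M : Type*} (f : ℤ → M) {a b : ℤ} (h : a ≤ b) :
    intList f a b = f a :: intList f (a + 1) b := by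
  rw [intList_eq_map_range, intList_eq_map_range,
    show (b + 1 - a).toNat = (b + 1 - (a + 1)).toNat + 1 by omega, List.range_succ_eq_map,
    List.map_cons, List.map_map]
  simp only [Nat.cast_zero, add_zero, Function.comp_def, Nat.cast_succ]
  congr 2
  funext p
  congr 1
  ring

theorem eI_zero (f : ℤ → R) (a b : ℤ) : eI f a b 0 = 1 :=
  esymL_zero _

theorem eI_eq_zero_of_lt (f : ℤ → R) {a b m : ℤ} (h : ((b + 1 - a).toNat : ℤ) < m) :
    eI f a b m = 0 :=
  esymL_eq_zero_of_length_lt _ (by rw [intList_length]; omega)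

theorem eI_cons (f : ℤ → R) {a b : ℤ} (h : a ≤ b) (m : ℤ) :
    eI f a b m = eI f (a + 1) b m + f a * eI f (a + 1) b (m - 1) := by
  rw [eI, intList_cons f h, esymL_cons]
  rfl

theorem hI_zero (f : ℤ → R) (a b : ℤ) : hI f a b 0 = 1 :=
  hsymL_zero _

theorem Amat_eq_zero_of_lt (α : ℤ → R) {k p q : ℤ} (h : q < p + k) : Amat α k p q = 0 := by
  rw [Amat, if_neg (by omega), if_neg (by omega)]

theorem Amat_zero (α : ℤ → R) (p q : ℤ) : Amat α 0 p q = if p = q then 1 else 0 := by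
  rcases eq_or_ne p q with rfl | h
  · simp [Amat, hI_zero]
  · rw [Amat, if_neg (by omega), if_neg (by omega), if_neg h]

theorem Amat_of_nonneg (α : ℤ → R) {k : ℤ} (hk : 0 ≤ k) (p q : ℤ) :
    Amat α k p q = if p + k ≤ q then eI (fun t => -α t) (p + 1) (q - 1) (q - p - k) else 0 := by
  rcases hk.lt_or_eq with hk | rfl
  · by_cases h : p + k ≤ q <;> simp [Amat, h, hk]
  · rw [Amat_zero]
    rcases lt_trichotomy p q with h | rfl | h
    · rw [if_neg h.ne, if_pos (by omega), eI_eq_zero_of_lt _ (by omega)]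
    · simp [eI_zero]
    · rw [if_neg h.ne', if_neg (by omega)]

theorem Amat_add_one (α : ℤ → R) {k : ℤ} (hk : 0 ≤ k) (p q : ℤ) :
    Amat α (k + 1) p q = Amat α k (p + 1) q - α (p + 1) * Amat α (k + 1) (p + 1) q := by
  rw [Amat_of_nonneg α (by omega), Amat_of_nonneg α hk, Amat_of_nonneg α (by omega)]
  rcases lt_trichotomy q (p + k + 1) with h | rfl | h
  · simp [show ¬ p + (k + 1) ≤ q by omega, show ¬ p + 1 + k ≤ q by omega,
      show ¬ p + 1 + (k + 1) ≤ q by omega]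
  · rw [if_pos (by omega), if_pos (by omega), if_neg (by omega),
      show p + k + 1 - p - (k + 1) = 0 by ring, show p + k + 1 - (p + 1) - k = 0 by ring,
      eI_zero, eI_zero, mul_zero, sub_zero]
  · rw [if_pos (by omega), if_pos (by omega), if_pos (by omega), eI_cons _ (by omega),
      show q - (p + 1) - k = q - p - (k + 1) by ring,
      show q - (p + 1) - (k + 1) = q - p - (k + 1) - 1 by ring]
    ring

theorem sum_Icc_Amat_mul (α : ℤ → R) {k l : ℤ} (hk : 0 ≤ k) (hl : 0 ≤ l) (p q : ℤ) :
    ∑ a ∈ Finset.Icc p q, Amat α k p a * Amat α l a q = Amat α (k + l) p q := by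
  have empty (p : ℤ) (hqp : q < p) {k : ℤ} (hk : 0 ≤ k) :
      ∑ a ∈ Finset.Icc p q, Amat α k p a * Amat α l a q = Amat α (k + l) p q := by
    rw [Finset.Icc_eq_empty_of_lt hqp, Finset.sum_empty, Amat_eq_zero_of_lt α (by omega)]
  induction p using Int.inductionOn' (b := q + 1) generalizing k with
  | zero => exact empty _ (by omega) hk
  | succ p hp _ => exact empty _ (by omega) hk
  | pred p hp ih =>
    obtain ⟨p, rfl⟩ : ∃ p', p = p' + 1 := ⟨p - 1, by ring⟩
    rw [add_sub_cancel_right, ← Finset.insert_Icc_add_one_left_eq_Icc (by omega : p ≤ q),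
      Finset.sum_insert (by simp)]
    rcases hk.lt_or_eq with hpos | rfl
    · obtain ⟨k, hk₀, rfl⟩ : ∃ k', 0 ≤ k' ∧ k = k' + 1 := ⟨k - 1, by omega, by ring⟩
      rw [Amat_eq_zero_of_lt α (by omega : p < p + (k + 1)), zero_mul, zero_add]
      simp_rw [Amat_add_one α hk₀ p, sub_mul, Finset.sum_sub_distrib, mul_assoc, ← Finset.mul_sum]
      rw [ih hk₀, ih (by omega : 0 ≤ k + 1), add_right_comm k 1 l,
        Amat_add_one α (by omega : 0 ≤ k + l) p q]
    · simp [Amat_zero]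

/-- Lemma 3.2: for k, ℓ > 0, the product A^k_{p,a} · A^ℓ_{a,q} vanishes unless
p + k ≤ a ≤ q − ℓ, and ∑_{a=p+k}^{q−ℓ} A^k_{p,a} A^ℓ_{a,q} = A^{k+ℓ}_{p,q}. -/
theorem Amat_mul_pos (α : ℤ → R) (k l p q : ℤ) (hk : 0 < k) (hl : 0 < l) :
    (∀ a : ℤ, a ∉ Finset.Icc (p + k) (q - l) → Amat α k p a * Amat α l a q = 0) ∧
      ∑ a ∈ Finset.Icc (p + k) (q - l), Amat α k p a * Amat α l a q = Amat α (k + l) p q := by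
  have vanish (a : ℤ) (ha : a ∉ Finset.Icc (p + k) (q - l)) :
      Amat α k p a * Amat α l a q = 0 := by
    rw [Finset.mem_Icc, not_and_or, not_le, not_le] at ha
    rcases ha with ha | ha
    · rw [Amat_eq_zero_of_lt α ha, zero_mul]
    · rw [Amat_eq_zero_of_lt α (by omega : q < a + l), mul_zero]
  refine ⟨vanish, ?_⟩
  rw [← sum_Icc_Amat_mul α hk.le hl.le p q]
  exact Finset.sum_subset (Finset.Icc_subset_Icc (by omega) (by omega)) fun a _ ha => vanish a ha
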